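/- Let n ≥ 1 and let α_1,…,α_n, β_1,…,β_{n−1} be admissible rational hypergeometric parameters, i.e. 0 < α_j, β_k < 1 for all j, k and α_j ≠ β_k for all j, k, and let p be a good prime, i.e. v_p(α_j−1) = v_p(β_k−1) = 0 for all j, k. Then the p-adic valuations of the coefficients A_m = (∏_j (α_j)_m) / ((∏_k (β_k)_m) · m!) of ₙF_{n−1} are unbounded above: for every B ∈ ℕ there exists m with v_p(A_m) ≥ B. -/

import Mathlib

open scoped BigOperators

/-- The `m`-th coefficient `A_m = (a)_m (b)_m / ((c)_m · m!)` of the Gauss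
hypergeometric series `₂F₁(a,b;c;z)`. -/
noncomputable def hypCoeff (a b c : ℚ) (m : ℕ) : ℚ :=
  ((ascPochhammer ℚ m).eval a * (ascPochhammer ℚ m).eval b) /
    ((ascPochhammer ℚ m).eval c * (m.factorial : ℚ))

/-- `₂F₁(a,b;c;z)` has `p`-adically unbounded coefficients. -/
def UnboundedAt (p : ℕ) (a b c : ℚ) : Prop :=
  ∀ N : ℕ, ∃ m : ℕ, padicValRat p (hypCoeff a b c m) < -(N : ℤ)

/-- `(a,b;c)` are admissible hypergeometric parameters. -/
def Admissible (a b c : ℚ) : Prop :=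
  0 < a ∧ a < 1 ∧ 0 < b ∧ b < 1 ∧ 0 < c ∧ c < 1 ∧ a ≠ c ∧ b ≠ c

/-- `τ : ℕ → ℤ` is the family of truncations of the rational number `x`
(with `v_p(x) ≥ 0`): `τ j` is the unique integer with `0 ≤ τ j < p^j` and
`v_p(x - τ j) ≥ j` (the latter interpreted as `x = τ j` or `j ≤ v_p(x - τ j)`). -/
def IsTrunc (p : ℕ) (x : ℚ) (τ : ℕ → ℤ) : Prop :=
  ∀ j : ℕ, 0 ≤ τ j ∧ τ j < (p : ℤ) ^ j ∧
    (x = (τ j : ℚ) ∨ (j : ℤ) ≤ padicValRat p (x - τ j))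

/-- The `m`-th coefficient of the generalized hypergeometric series
`ₙF_{n−1}(α_1,…,α_n; β_1,…,β_{n−1}; z)`. -/
noncomputable def genHypCoeff (n : ℕ) (α : Fin n → ℚ) (β : Fin (n - 1) → ℚ)
    (m : ℕ) : ℚ :=
  (∏ j, (ascPochhammer ℚ m).eval (α j)) /
    ((∏ k, (ascPochhammer ℚ m).eval (β k)) * (m.factorial : ℚ))

/-- The number of carries in the base-`p` addition of `x` and `m`, where
`τ` is the family of truncations of `x`: the number of `j ≥ 1` with
`τ_j(x) + (m mod p^j) ≥ p^j`. -/
noncomputable def carries (p : ℕ) (τ : ℕ → ℤ) (m : ℕ) : ℕ :=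
  {j : ℕ | 1 ≤ j ∧ (p : ℤ) ^ j ≤ τ j + ((m % p ^ j : ℕ) : ℤ)}.ncard

/-!
Write a parameter as `x = a / b` with `p ∤ b`; then `v_p((x)_m) = v_p(∏_{k<m} (a + k b))`, and this
valuation is the sum over `j ≥ 1` of the number of terms of the progression divisible by `p ^ j`.
Take `m = p ^ T - 1`. For `j ≤ T` the terms with `k < p ^ T` meet every residue class modulo `p ^ j`
exactly `p ^ (T - j)` times, and for `j > T` each level contains at most one term. Goodness
(`p ∤ a - b`) says that the omitted term `k = p ^ T - 1` is prime to `p`, so every parameter has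
`v_p((x)_m) = ∑_{j ≤ T} p ^ (T - j) + O_x(1)`. For `m!`, i.e. the progression `1, 2, …`, the omitted
term is `p ^ T` itself, so `v_p(m!) = ∑_{j ≤ T} p ^ (T - j) - T`. With `n` parameters upstairs and
`n - 1` downstairs this gives `v_p(A_m) ≥ T - C` with `C` depending only on the `β`s.
-/

open Finset
open scoped Nat

theorem exists_modEq_iff_dvd_add_mul {q b : ℕ} (hq : 0 < q) (hb : b.Coprime q) (a : ℕ) :
    ∃ r, ∀ k, q ∣ a + k * b ↔ k ≡ r [MOD q] := by
  have : NeZero q := ⟨hq.ne'⟩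
  let u := ZMod.unitOfCoprime b hb
  refine ⟨(-(a : ZMod q) * ↑u⁻¹).val, fun k => ?_⟩
  rw [← ZMod.natCast_eq_natCast_iff, ZMod.natCast_zmod_val, Units.eq_mul_inv_iff_mul_eq,
    ZMod.coe_unitOfCoprime, eq_neg_iff_add_eq_zero, add_comm, ← ZMod.natCast_eq_zero_iff]
  push_cast
  rfl

theorem card_filter_dvd_add_mul_range_mul {q b : ℕ} (hq : 0 < q) (hb : b.Coprime q)
    (a c : ℕ) : #{k ∈ range (q * c) | q ∣ a + k * b} = c := by
  obtain ⟨r, hr⟩ := exists_modEq_iff_dvd_add_mul hq hb a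
  simp_rw [hr, ← Nat.count_eq_card_filter_range, Nat.count_modEq_card _ hq, Nat.mul_mod_right,
    Nat.mul_div_cancel_left c hq]
  simp

theorem card_filter_dvd_add_mul_le_one {q b m : ℕ} (hq : 0 < q) (hb : b.Coprime q)
    (hm : m ≤ q) (a : ℕ) : #{k ∈ range m | q ∣ a + k * b} ≤ 1 := by
  obtain ⟨r, hr⟩ := exists_modEq_iff_dvd_add_mul hq hb a
  refine card_le_one.mpr fun x hx y hy => ?_
  simp only [mem_filter, mem_range, hr] at hx hy
  exact Nat.ModEq.eq_of_lt_of_lt (hx.2.trans hy.2.symm) (by omega) (by omega)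

theorem ascPochhammer_eval_eq_prod_range {R : Type*} [CommSemiring R] (m : ℕ) (x : R) :
    (ascPochhammer R m).eval x = ∏ k ∈ range m, (x + k) := by
  induction m with
  | zero => simp
  | succ m ih => rw [ascPochhammer_succ_eval, ih, prod_range_succ]

theorem Rat.num_sub_one (x : ℚ) : (x - 1).num = x.num - x.den := by
  have h := Rat.mul_den_eq_num (x - 1)
  rw [show (x - 1).den = x.den by simp, sub_mul, Rat.mul_den_eq_num, one_mul] at h
  exact_mod_cast h.symm

section PrimeValuation

variable {p : ℕ} [hp : Fact p.Prime]

theorem padicValNat_eq_card_pow_dvd {n J : ℕ} (hn : n ≠ 0) (hJ : n < p ^ J) :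
    padicValNat p n = #{j ∈ Ico 1 J | p ^ j ∣ n} := by
  have h := Nat.emultiplicity_eq_card_pow_dvd hp.out.ne_one (Nat.pos_of_ne_zero hn)
    (Nat.log_lt_of_lt_pow hn hJ)
  rw [← padicValNat_eq_emultiplicity hn] at h
  exact_mod_cast h

theorem padicValNat_prod_eq_sum_card_pow_dvd {ι : Type*} {s : Finset ι} {f : ι → ℕ} {J : ℕ}
    (hf0 : ∀ i ∈ s, f i ≠ 0) (hfJ : ∀ i ∈ s, f i < p ^ J) :
    padicValNat p (∏ i ∈ s, f i) = ∑ j ∈ Ico 1 J, #{i ∈ s | p ^ j ∣ f i} := by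
  calc padicValNat p (∏ i ∈ s, f i) = ∑ i ∈ s, padicValNat p (f i) := by
        simp only [← Nat.factorization_def _ hp.out, Nat.factorization_prod hf0,
          Finsupp.finsetSum_apply]
    _ = ∑ i ∈ s, #{j ∈ Ico 1 J | p ^ j ∣ f i} :=
        sum_congr rfl fun i hi => padicValNat_eq_card_pow_dvd (hf0 i hi) (hfJ i hi)
    _ = _ := by simp only [card_filter]; exact sum_comm

theorem padicValRat_prod {ι : Type*} {s : Finset ι} {f : ι → ℚ} (hf : ∀ i ∈ s, f i ≠ 0) :
    padicValRat p (∏ i ∈ s, f i) = ∑ i ∈ s, padicValRat p (f i) := by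
  induction s using Finset.cons_induction with
  | empty => simp
  | cons i s hi ih =>
    rw [prod_cons, sum_cons, padicValRat.mul (hf i (mem_cons_self i s))
        (prod_ne_zero_iff.mpr fun j hj => hf j (mem_cons_of_mem hj)),
      ih fun j hj => hf j (mem_cons_of_mem hj)]

theorem card_filter_pow_dvd_range_pow_sub_one {a b j T : ℕ} (hb : ¬ p ∣ b) (hj : j ≤ T) :
    #{k ∈ range (p ^ T - 1) | p ^ j ∣ a + k * b}
      + (if p ^ j ∣ a + (p ^ T - 1) * b then 1 else 0) = p ^ (T - j) := by
  have hcop : b.Coprime (p ^ j) :=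
    ((Nat.coprime_comm.mp (hp.out.coprime_iff_not_dvd.mpr hb))).pow_right j
  have hfull := card_filter_dvd_add_mul_range_mul (pow_pos hp.out.pos j) hcop a (p ^ (T - j))
  rw [← pow_add, Nat.add_sub_cancel' hj] at hfull
  set m := p ^ T - 1
  have hm : p ^ T = m + 1 := (Nat.sub_one_add_one (pow_ne_zero T hp.out.ne_zero)).symm
  rw [← hfull, hm, range_add_one, filter_insert]
  split_ifs <;> simp

theorem padicValNat_factorial_pow_sub_one_add (T : ℕ) :
    padicValNat p (p ^ T - 1)! + T = ∑ j ∈ Ico 1 (T + 1), p ^ (T - j) := by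
  have hfac : (p ^ T - 1)! = ∏ k ∈ range (p ^ T - 1), (1 + k * 1) := by
    rw [← prod_range_add_one_eq_factorial]
    exact prod_congr rfl fun k _ => by ring
  have hlt : ∀ k ∈ range (p ^ T - 1), 1 + k * 1 < p ^ (T + 1) := fun k hk => by
    have := Nat.pow_le_pow_right hp.out.pos (by omega : T ≤ T + 1)
    simp only [mem_range] at hk
    omega
  rw [hfac, padicValNat_prod_eq_sum_card_pow_dvd (fun _ _ => by omega) hlt]
  calc _ = ∑ j ∈ Ico 1 (T + 1), (#{k ∈ range (p ^ T - 1) | p ^ j ∣ 1 + k * 1} + 1) := by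
        rw [sum_add_distrib, sum_const, Nat.card_Ico, smul_eq_mul, mul_one, Nat.add_sub_cancel]
    _ = _ := sum_congr rfl fun j hj => by
        rw [mem_Ico] at hj
        have hlast : p ^ j ∣ 1 + (p ^ T - 1) * 1 := by
          rw [mul_one, Nat.add_sub_cancel' (Nat.one_le_pow _ _ hp.out.pos)]
          exact pow_dvd_pow p (by omega)
        have hcount := card_filter_pow_dvd_range_pow_sub_one (a := 1) (b := 1)
          (by simpa using hp.out.ne_one) (by omega : j ≤ T)
        rwa [if_pos hlast] at hcount

theorem padicValNat_prod_range_pow_sub_one_bounds {a b T : ℕ} (ha : 0 < a) (hb : ¬ p ∣ b)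
    (hlast : ¬ p ∣ a + (p ^ T - 1) * b) :
    padicValNat p (p ^ T - 1)! + T ≤ padicValNat p (∏ k ∈ range (p ^ T - 1), (a + k * b)) ∧
      padicValNat p (∏ k ∈ range (p ^ T - 1), (a + k * b))
        ≤ padicValNat p (p ^ T - 1)! + T + (a + b) := by
  have hlt : ∀ k ∈ range (p ^ T - 1), a + k * b < p ^ (T + (a + b) + 1) := fun k hk => by
    simp only [mem_range] at hk
    have h1 : 1 ≤ p ^ T := Nat.one_le_pow _ _ hp.out.pos
    have h2 : a + b < p ^ (a + b + 1) := Nat.lt_pow_self hp.out.one_lt |>.trans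
      (Nat.pow_lt_pow_right hp.out.one_lt (Nat.lt_succ_self _))
    have h3 : k * b ≤ b * p ^ T := mul_comm b (p ^ T) ▸ Nat.mul_le_mul_right b (by omega)
    have h4 : a ≤ a * p ^ T := Nat.le_mul_of_pos_right a (by omega)
    calc a + k * b ≤ (a + b) * p ^ T := by rw [add_mul]; omega
      _ < p ^ (a + b + 1) * p ^ T := Nat.mul_lt_mul_of_pos_right h2 (by omega)
      _ = p ^ (T + (a + b) + 1) := by ring
  have hlow : ∑ j ∈ Ico 1 (T + 1), #{k ∈ range (p ^ T - 1) | p ^ j ∣ a + k * b}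
      = padicValNat p (p ^ T - 1)! + T := by
    rw [padicValNat_factorial_pow_sub_one_add]
    refine sum_congr rfl fun j hj => ?_
    rw [mem_Ico] at hj
    have hnot : ¬ p ^ j ∣ a + (p ^ T - 1) * b :=
      fun h => hlast ((dvd_pow_self p (by omega)).trans h)
    have hcount := card_filter_pow_dvd_range_pow_sub_one (a := a) hb (by omega : j ≤ T)
    rwa [if_neg hnot, add_zero] at hcount
  have hhigh : ∑ j ∈ Ico (T + 1) (T + (a + b) + 1),
      #{k ∈ range (p ^ T - 1) | p ^ j ∣ a + k * b} ≤ a + b := by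
    calc _ ≤ ∑ _j ∈ Ico (T + 1) (T + (a + b) + 1), 1 := sum_le_sum fun j hj => by
          rw [mem_Ico] at hj
          have := Nat.pow_le_pow_right hp.out.pos (by omega : T ≤ j)
          exact card_filter_dvd_add_mul_le_one (pow_pos hp.out.pos j)
            ((Nat.coprime_comm.mp (hp.out.coprime_iff_not_dvd.mpr hb)).pow_right j) (by omega) a
      _ = a + b := by simp
  rw [padicValNat_prod_eq_sum_card_pow_dvd (fun _ _ => by omega) hlt,
    ← sum_Ico_consecutive _ (by omega : 1 ≤ T + 1) (by omega : T + 1 ≤ T + (a + b) + 1)]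
  omega

theorem padicValRat_ascPochhammer_eval_div {a b : ℕ} (hb : ¬ p ∣ b) (m : ℕ) :
    padicValRat p ((ascPochhammer ℚ m).eval ((a : ℚ) / b)) =
      padicValNat p (∏ k ∈ range m, (a + k * b)) := by
  have hb0 : (b : ℚ) ≠ 0 := Nat.cast_ne_zero.mpr fun h => hb (h ▸ dvd_zero p)
  have heval : (ascPochhammer ℚ m).eval ((a : ℚ) / b) =
      ((∏ k ∈ range m, (a + k * b) : ℕ) : ℚ) / (b : ℚ) ^ m := by
    calc (ascPochhammer ℚ m).eval ((a : ℚ) / b)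
        = ∏ k ∈ range m, ((a + k * b : ℕ) : ℚ) / b := by
          rw [ascPochhammer_eval_eq_prod_range]
          refine prod_congr rfl fun k _ => ?_
          field_simp
          push_cast
          ring
      _ = _ := by rw [prod_div_distrib, prod_const, card_range, Nat.cast_prod]
  by_cases hN : ∏ k ∈ range m, (a + k * b) = 0
  · simp [heval, hN]
  rw [heval, padicValRat.div (Nat.cast_ne_zero.mpr hN) (pow_ne_zero m hb0), padicValRat.pow,
    padicValRat.of_nat, padicValRat.of_nat, padicValNat.eq_zero_of_not_dvd hb]
  simp

theorem not_dvd_num_and_den_of_padicValRat_eq_zero {q : ℚ} (hq : q ≠ 0)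
    (h : padicValRat p q = 0) : ¬ (p : ℤ) ∣ q.num ∧ ¬ p ∣ q.den := by
  rw [padicValRat_def] at h
  have hden : ¬ p ∣ q.den := fun hd => by
    -- `num` and `den` are coprime, so `p ∤ num` and the valuation is negative
    have hnum : ¬ (p : ℤ) ∣ q.num := fun hn =>
      hp.out.one_lt.ne' (Nat.dvd_one.mp (q.reduced ▸ Nat.dvd_gcd (Int.natCast_dvd.mp hn) hd))
    have := one_le_padicValNat_of_dvd q.den_ne_zero hd
    rw [padicValInt.eq_zero_of_not_dvd hnum] at h
    omega
  rw [padicValNat.eq_zero_of_not_dvd hden, Nat.cast_zero, sub_zero, Nat.cast_eq_zero,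
    padicValInt.eq_zero_iff] at h
  exact ⟨h.resolve_left hp.out.ne_one |>.resolve_left (Rat.num_ne_zero.mpr hq), hden⟩

theorem padicValRat_ascPochhammer_pow_sub_one_bounds {x : ℚ} (hx0 : 0 < x) (hx1 : x ≠ 1)
    (hgood : padicValRat p (x - 1) = 0) {T : ℕ} (hT : 1 ≤ T) :
    ((padicValNat p (p ^ T - 1)! + T : ℕ) : ℤ)
        ≤ padicValRat p ((ascPochhammer ℚ (p ^ T - 1)).eval x) ∧
      padicValRat p ((ascPochhammer ℚ (p ^ T - 1)).eval x)
        ≤ ((padicValNat p (p ^ T - 1)! + T + (x.num.natAbs + x.den) : ℕ) : ℤ) := by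
  obtain ⟨hnum, hden⟩ := not_dvd_num_and_den_of_padicValRat_eq_zero (sub_ne_zero.mpr hx1) hgood
  rw [Rat.num_sub_one] at hnum
  rw [show (x - 1).den = x.den by simp] at hden
  have hnum0 : 0 < x.num := Rat.num_pos.mpr hx0
  have hnum_eq : ((x.num.natAbs : ℕ) : ℤ) = x.num := Int.natAbs_of_nonneg hnum0.le
  have hx : x = (x.num.natAbs : ℚ) / x.den := by
    rw [← Int.cast_natCast, hnum_eq, Rat.num_div_den]
  -- the omitted factor `a + (p ^ T - 1) b` is `≡ a - b (mod p)`
  have hlast : ¬ p ∣ x.num.natAbs + (p ^ T - 1) * x.den := fun h => hnum <| by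
    have hsplit : ((x.num.natAbs + (p ^ T - 1) * x.den : ℕ) : ℤ)
        = (x.num - x.den) + p ^ T * x.den := by
      push_cast [hnum_eq, Nat.one_le_pow _ _ hp.out.pos]
      ring
    have hpT : (p : ℤ) ∣ p ^ T * x.den := dvd_mul_of_dvd_left (dvd_pow_self _ (by omega)) _
    exact (dvd_add_left hpT).mp (hsplit ▸ Int.natCast_dvd_natCast.mpr h)
  have hval := padicValRat_ascPochhammer_eval_div (a := x.num.natAbs) hden (p ^ T - 1)
  rw [← hx] at hval
  rw [hval]
  exact_mod_cast padicValNat_prod_range_pow_sub_one_bounds (Int.natAbs_pos.mpr hnum0.ne') hden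
    hlast

theorem padicValRat_genHypCoeff {n : ℕ} {α : Fin n → ℚ} {β : Fin (n - 1) → ℚ}
    (hα : ∀ j, 0 < α j) (hβ : ∀ k, 0 < β k) (m : ℕ) :
    padicValRat p (genHypCoeff n α β m) =
      ∑ j, padicValRat p ((ascPochhammer ℚ m).eval (α j))
        - ∑ k, padicValRat p ((ascPochhammer ℚ m).eval (β k)) - padicValNat p m ! := by
  have hα0 : ∀ j ∈ univ, (ascPochhammer ℚ m).eval (α j) ≠ 0 :=
    fun j _ => (ascPochhammer_pos m _ (hα j)).ne'
  have hβ0 : ∀ k ∈ univ, (ascPochhammer ℚ m).eval (β k) ≠ 0 :=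
    fun k _ => (ascPochhammer_pos m _ (hβ k)).ne'
  have hfac : (m ! : ℚ) ≠ 0 := Nat.cast_ne_zero.mpr m.factorial_ne_zero
  rw [genHypCoeff, padicValRat.div (prod_ne_zero_iff.mpr hα0)
      (mul_ne_zero (prod_ne_zero_iff.mpr hβ0) hfac),
    padicValRat.mul (prod_ne_zero_iff.mpr hβ0) hfac, padicValRat_prod hα0, padicValRat_prod hβ0,
    padicValRat.of_nat, sub_add_eq_sub_sub]

end PrimeValuation

/-- For admissible parameters and a good prime `p`, the `p`-adic valuations of the
coefficients of `ₙF_{n−1}` are unbounded above. -/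
theorem stmt_8 (n : ℕ) (hn : 1 ≤ n) (α : Fin n → ℚ) (β : Fin (n - 1) → ℚ)
    (hadm : (∀ j, 0 < α j ∧ α j < 1) ∧ (∀ k, 0 < β k ∧ β k < 1) ∧
      ∀ j k, α j ≠ β k)
    (p : ℕ) (hp : p.Prime)
    (hgood : (∀ j, padicValRat p (α j - 1) = 0) ∧
      (∀ k, padicValRat p (β k - 1) = 0)) :
    ∀ B : ℕ, ∃ m : ℕ, (B : ℤ) ≤ padicValRat p (genHypCoeff n α β m) := by
  have : Fact p.Prime := ⟨hp⟩
  obtain ⟨hα, hβ, -⟩ := hadm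
  intro B
  set C : ℕ := ∑ k, ((β k).num.natAbs + (β k).den)
  set T := B + C + 1 with hT
  refine ⟨p ^ T - 1, ?_⟩
  rw [padicValRat_genHypCoeff (fun j => (hα j).1) (fun k => (hβ k).1)]
  set F := padicValNat p (p ^ T - 1)!
  have hlow : ((n * (F + T) : ℕ) : ℤ) ≤
      ∑ j, padicValRat p ((ascPochhammer ℚ (p ^ T - 1)).eval (α j)) :=
    calc ((n * (F + T) : ℕ) : ℤ) = ∑ _j : Fin n, ((F + T : ℕ) : ℤ) := by simp
      _ ≤ _ := sum_le_sum fun j _ => (padicValRat_ascPochhammer_pow_sub_one_bounds (hα j).1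
        (hα j).2.ne (hgood.1 j) (by omega)).1
  have hup : ∑ k, padicValRat p ((ascPochhammer ℚ (p ^ T - 1)).eval (β k)) ≤
      (((n - 1) * (F + T) + C : ℕ) : ℤ) :=
    calc _ ≤ ∑ k : Fin (n - 1), ((F + T + ((β k).num.natAbs + (β k).den) : ℕ) : ℤ) :=
          sum_le_sum fun k _ => (padicValRat_ascPochhammer_pow_sub_one_bounds (hβ k).1
            (hβ k).2.ne (hgood.2 k) (by omega)).2
      _ = _ := by
          rw [← Nat.cast_sum, sum_add_distrib, sum_const, card_univ, Fintype.card_fin, smul_eq_mul]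
  clear_value C T F
  push_cast [Nat.cast_sub hn] at hlow hup ⊢
  linarith
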